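/- For a DAG on n vertices with a q-labeling (each vertex independently ranked with probability q, ranks a uniformly random permutation of the ranked vertices), and any c ≥ 3: with probability at least 1 − 1/n^{c−2}, for every vertex v the number of unranked predecessors u of v with ℓ(u) = ℓ(v) is at most c·log(n)/q. -/

import Mathlib

open Classical Finset
open scoped Classical

noncomputable section

variable {V : Type*}

/-- Reachability: `reach adj u v` iff there is a directed path from `u` to `v`
(including the trivial path, so `reach adj v v` always holds). -/
def reach (adj : V → V → Prop) : V → V → Prop := Relation.ReflTransGen adj

/-- The graph has no (nontrivial) directed cycle. -/
def IsAcyclic (adj : V → V → Prop) : Prop := ∀ x, ¬ Relation.TransGen adj x x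

/-- `P(v)`: the set of predecessors of `v` (vertices with a path to `v`, including `v`). -/
def predSet [Fintype V] (adj : V → V → Prop) (v : V) : Finset V :=
  Finset.univ.filter fun u => reach adj u v

/-- `S(v)`: the set of successors of `v` (vertices reachable from `v`, including `v`). -/
def succSet [Fintype V] (adj : V → V → Prop) (v : V) : Finset V :=
  Finset.univ.filter fun u => reach adj v u

/-- The element of `A` of minimum rank (an arbitrary vertex if `A = ∅`). -/
def argminR [Nonempty V] (r : V → ℕ∞) (A : Finset V) : V :=
  if h : A.Nonempty then (Finset.exists_min_image A r h).choose else Classical.arbitrary V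

/-- The sets `A_{i+1}(v)` (0-indexed: `Aset adj L r v i` is the paper's `A_{i+1}(v)`):
`A_1(v) = P(v) ∩ L`, and `A_{i+1}(v) = (S(ℓ_i(v)) ∩ P(v) ∩ L) \ {ℓ_i(v)}` where
`ℓ_i(v)` is the minimum-rank element of `A_i(v)`. -/
def Aset [Fintype V] [Nonempty V] (adj : V → V → Prop) (L : Finset V) (r : V → ℕ∞)
    (v : V) : ℕ → Finset V
  | 0 => predSet adj v ∩ L
  | i + 1 =>
    if (Aset adj L r v i).Nonempty then
      (succSet adj (argminR r (Aset adj L r v i)) ∩ predSet adj v ∩ L).erase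
        (argminR r (Aset adj L r v i))
    else ∅

/-- `ℓ_{i+1}(v)` (0-indexed). -/
def labVertex [Fintype V] [Nonempty V] (adj : V → V → Prop) (L : Finset V) (r : V → ℕ∞)
    (v : V) (i : ℕ) : V := argminR r (Aset adj L r v i)

/-- `k(v)`: the number of indices `i` with `A_{i+1}(v) ≠ ∅` (in a DAG the sets shrink,
so this is the largest `i` with `A_i(v) ≠ ∅`, in the paper's 1-indexed convention). -/
def kOf [Fintype V] [Nonempty V] (adj : V → V → Prop) (L : Finset V) (r : V → ℕ∞) (v : V) : ℕ :=
  ((Finset.range (Fintype.card V + 1)).filter fun i => (Aset adj L r v i).Nonempty).card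

/-- The label `ℓ(v) = (ℓ_1(v), …, ℓ_{k(v)}(v))`. -/
def labelSeq [Fintype V] [Nonempty V] (adj : V → V → Prop) (L : Finset V) (r : V → ℕ∞)
    (v : V) : List V :=
  (List.range (kOf adj L r v)).map (labVertex adj L r v)

/-- The rank sequence `r(ℓ(v))` with `+∞` appended. -/
def rankSeq [Fintype V] [Nonempty V] (adj : V → V → Prop) (L : Finset V) (r : V → ℕ∞)
    (v : V) : List ℕ∞ :=
  ((labelSeq adj L r v).map r) ++ [⊤]

/-- `ℓ(u) ≺ ℓ(v)`: decreasing lexicographic order on the rank sequences with `+∞` appended. -/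
def labLt [Fintype V] [Nonempty V] (adj : V → V → Prop) (L : Finset V) (r : V → ℕ∞)
    (u v : V) : Prop :=
  List.Lex (· < ·) (rankSeq adj L r v) (rankSeq adj L r u)


open MeasureTheory
open scoped ENNReal

instance instMeasurableSpaceEquivFin (V : Type*) [Fintype V] :
    MeasurableSpace (V ≃ Fin (Fintype.card V)) := ⊤

instance instNonemptyEquivFin (V : Type*) [Fintype V] :
    Nonempty (V ≃ Fin (Fintype.card V)) := ⟨Fintype.equivFin V⟩

/-!
If `ℓ(v)` is empty, no predecessor of `v` is ranked. Otherwise let `w` be the last vertex of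
`ℓ(v)`: every unranked `u` reaching `v` with `ℓ(u) = ℓ(v)` lies strictly between `w` and `v`,
and no vertex strictly between them is ranked, as it would lie in the empty set `A_{k+1}(v)`.
So a violation makes one of `n²` fixed vertex sets, of size more than `t = c log n / q`, entirely
unranked. Each such event has probability `(1 - q)^{|S|} ≤ e^{-qt} = n^{-c}`, and a union bound
gives `n^{2-c}`.
-/

section Reachability

variable {adj : V → V → Prop}

lemma reach_antisymm (hacyc : IsAcyclic adj) {u v : V} (huv : reach adj u v)
    (hvu : reach adj v u) : u = v := by
  rcases Relation.reflTransGen_iff_eq_or_transGen.mp huv with rfl | h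
  · rfl
  · exact (hacyc u (h.trans_left hvu)).elim

variable [Fintype V]

@[simp]
lemma mem_predSet {u v : V} : u ∈ predSet adj v ↔ reach adj u v := by
  simp [predSet]

@[simp]
lemma mem_succSet {u v : V} : u ∈ succSet adj v ↔ reach adj v u := by
  simp [succSet]

/-- The paper's `D(w, v) \ {w}`. -/
def between (adj : V → V → Prop) (w v : V) : Finset V :=
  (succSet adj w ∩ predSet adj v).erase w

@[simp]
lemma mem_between {w v x : V} : x ∈ between adj w v ↔ x ≠ w ∧ reach adj w x ∧ reach adj x v := by
  simp [between]

lemma between_self (hacyc : IsAcyclic adj) (v : V) : between adj v v = ∅ :=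
  Finset.eq_empty_of_forall_notMem fun x hx => by
    rw [mem_between] at hx
    exact hx.1 (reach_antisymm hacyc hx.2.2 hx.2.1)

end Reachability

lemma argminR_mem [Nonempty V] (r : V → ℕ∞) {A : Finset V} (h : A.Nonempty) :
    argminR r A ∈ A := by
  rw [argminR, dif_pos h]
  exact (Finset.exists_min_image A r h).choose_spec.1

section Labels

variable [Fintype V] [Nonempty V] {adj : V → V → Prop} {L : Finset V} {r : V → ℕ∞} {v : V}

lemma Aset_zero : Aset adj L r v 0 = predSet adj v ∩ L := by
  rw [Aset]

lemma Aset_succ_of_nonempty {i : ℕ} (h : (Aset adj L r v i).Nonempty) :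
    Aset adj L r v (i + 1) = between adj (labVertex adj L r v i) v ∩ L := by
  rw [Aset, if_pos h, between, labVertex, Finset.erase_inter]

lemma Aset_succ_of_eq_empty {i : ℕ} (h : Aset adj L r v i = ∅) :
    Aset adj L r v (i + 1) = ∅ := by
  rw [Aset, if_neg (by simp [h])]

lemma Aset_eq_empty_of_le {i j : ℕ} (hij : i ≤ j) (h : Aset adj L r v i = ∅) :
    Aset adj L r v j = ∅ := by
  induction j, hij using Nat.le_induction with
  | base => exact h
  | succ j _ ih => exact Aset_succ_of_eq_empty ih

lemma labVertex_mem {i : ℕ} (h : (Aset adj L r v i).Nonempty) :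
    labVertex adj L r v i ∈ Aset adj L r v i :=
  argminR_mem r h

lemma Aset_subset (i : ℕ) : Aset adj L r v i ⊆ predSet adj v ∩ L := by
  cases i with
  | zero => rw [Aset_zero]
  | succ i =>
    by_cases h : (Aset adj L r v i).Nonempty
    · intro x hx
      rw [Aset_succ_of_nonempty h, Finset.mem_inter, mem_between] at hx
      exact Finset.mem_inter.mpr ⟨mem_predSet.mpr hx.1.2.2, hx.2⟩
    · simp [Aset_succ_of_eq_empty (Finset.not_nonempty_iff_eq_empty.mp h)]

lemma Aset_succ_subset_erase (hacyc : IsAcyclic adj) (i : ℕ) :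
    Aset adj L r v (i + 1) ⊆ (Aset adj L r v i).erase (labVertex adj L r v i) := by
  by_cases h : (Aset adj L r v i).Nonempty
  · intro x hx
    rw [Aset_succ_of_nonempty h, Finset.mem_inter, mem_between] at hx
    obtain ⟨⟨hxw, hwx, hxv⟩, hxL⟩ := hx
    refine Finset.mem_erase.mpr ⟨hxw, ?_⟩
    cases i with
    | zero =>
      rw [Aset_zero]
      exact Finset.mem_inter.mpr ⟨mem_predSet.mpr hxv, hxL⟩
    | succ j =>
      have hj : (Aset adj L r v j).Nonempty := by
        by_contra hj
        exact h.ne_empty (Aset_succ_of_eq_empty (Finset.not_nonempty_iff_eq_empty.mp hj))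
      have hw := labVertex_mem h
      rw [Aset_succ_of_nonempty hj, Finset.mem_inter, mem_between] at hw ⊢
      obtain ⟨⟨hww', hw'w, -⟩, -⟩ := hw
      refine ⟨⟨?_, hw'w.trans hwx, hxv⟩, hxL⟩
      rintro rfl
      exact hww' (reach_antisymm hacyc hwx hw'w)
  · simp [Aset_succ_of_eq_empty (Finset.not_nonempty_iff_eq_empty.mp h)]

lemma card_Aset_le (hacyc : IsAcyclic adj) (i : ℕ) :
    #(Aset adj L r v i) ≤ Fintype.card V - i := by
  induction i with
  | zero => exact Finset.card_le_univ _
  | succ i ih =>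
    by_cases h : (Aset adj L r v i).Nonempty
    · have := Finset.card_le_card (Aset_succ_subset_erase (L := L) (r := r) (v := v) hacyc i)
      rw [Finset.card_erase_of_mem (labVertex_mem h)] at this
      omega
    · simp [Aset_succ_of_eq_empty (Finset.not_nonempty_iff_eq_empty.mp h)]

lemma kOf_le_of_Aset_eq_empty {i : ℕ} (h : Aset adj L r v i = ∅) : kOf adj L r v ≤ i := by
  refine (Finset.card_le_card fun j hj => ?_).trans_eq (Finset.card_range i)
  rw [Finset.mem_filter] at hj
  by_contra hji
  exact hj.2.ne_empty (Aset_eq_empty_of_le (not_lt.mp (by simpa using hji)) h)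

lemma lt_kOf_of_Aset_nonempty (hacyc : IsAcyclic adj) {i : ℕ}
    (h : (Aset adj L r v i).Nonempty) : i < kOf adj L r v := by
  have hi : i < Fintype.card V := by
    have := Finset.card_pos.mpr h
    have := card_Aset_le (L := L) (r := r) (v := v) hacyc i
    omega
  refine (Finset.card_range (i + 1)).symm.trans_le (Finset.card_le_card fun j hj => ?_)
  rw [Finset.mem_range] at hj
  refine Finset.mem_filter.mpr ⟨Finset.mem_range.mpr (by omega), ?_⟩
  by_contra hj'
  exact h.ne_empty (Aset_eq_empty_of_le (by omega) (Finset.not_nonempty_iff_eq_empty.mp hj'))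

lemma Aset_nonempty_iff (hacyc : IsAcyclic adj) {i : ℕ} :
    (Aset adj L r v i).Nonempty ↔ i < kOf adj L r v := by
  refine ⟨lt_kOf_of_Aset_nonempty hacyc, fun hi => ?_⟩
  by_contra h
  exact (kOf_le_of_Aset_eq_empty (Finset.not_nonempty_iff_eq_empty.mp h)).not_gt hi

lemma Aset_kOf (hacyc : IsAcyclic adj) : Aset adj L r v (kOf adj L r v) = ∅ := by
  by_contra h
  exact lt_irrefl _ ((Aset_nonempty_iff hacyc).mp (Finset.nonempty_iff_ne_empty.mpr h))

lemma kOf_eq_of_labelSeq_eq {u : V} (h : labelSeq adj L r u = labelSeq adj L r v) :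
    kOf adj L r u = kOf adj L r v := by
  simpa [labelSeq] using congrArg List.length h

lemma labVertex_eq_of_labelSeq_eq {u : V} (h : labelSeq adj L r u = labelSeq adj L r v)
    {i : ℕ} (hi : i < kOf adj L r v) : labVertex adj L r u i = labVertex adj L r v i := by
  have hmap := h
  rw [labelSeq, labelSeq, kOf_eq_of_labelSeq_eq h, List.map_inj_left] at hmap
  exact hmap i (List.mem_range.mpr hi)

end Labels

section Cover

variable [Fintype V] [Nonempty V] {adj : V → V → Prop} {L : Finset V} {r : V → ℕ∞} {v : V}

def sameLabelUnranked (adj : V → V → Prop) (L : Finset V) (r : V → ℕ∞) (v : V) : Finset V :=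
  Finset.univ.filter fun u => u ∉ L ∧ reach adj u v ∧ labelSeq adj L r u = labelSeq adj L r v

/-- The diagonal `w = v` covers the vertices with empty label. -/
def candidate (adj : V → V → Prop) (w v : V) : Finset V :=
  if w = v then predSet adj v else between adj w v

lemma sameLabelUnranked_subset_between (hacyc : IsAcyclic adj) {m : ℕ}
    (hk : kOf adj L r v = m + 1) :
    sameLabelUnranked adj L r v ⊆ between adj (labVertex adj L r v m) v := by
  intro u hu
  obtain ⟨huL, huv, hlab⟩ := (Finset.mem_filter.mp hu).2
  have hm : m < kOf adj L r u := by rw [kOf_eq_of_labelSeq_eq hlab, hk]; omega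
  have hw := Aset_subset m (labVertex_mem ((Aset_nonempty_iff hacyc).mpr hm))
  rw [labVertex_eq_of_labelSeq_eq hlab (by omega), Finset.mem_inter, mem_predSet] at hw
  exact mem_between.mpr ⟨fun h => huL (h ▸ hw.2), hw.1, huv⟩

lemma disjoint_between_labVertex (hacyc : IsAcyclic adj) {m : ℕ}
    (hk : kOf adj L r v = m + 1) : Disjoint (between adj (labVertex adj L r v m) v) L := by
  have hm : (Aset adj L r v m).Nonempty := (Aset_nonempty_iff hacyc).mpr (by omega)
  rw [Finset.disjoint_iff_inter_eq_empty, ← Aset_succ_of_nonempty hm, ← hk, Aset_kOf hacyc]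

lemma exists_candidate_superset (hacyc : IsAcyclic adj)
    (hC : (sameLabelUnranked adj L r v).Nonempty) :
    ∃ w, sameLabelUnranked adj L r v ⊆ candidate adj w v ∧ Disjoint (candidate adj w v) L := by
  cases hk : kOf adj L r v with
  | zero =>
    refine ⟨v, ?_, ?_⟩
    · intro u hu
      simpa [candidate] using (Finset.mem_filter.mp hu).2.2.1
    · rw [candidate, if_pos rfl, Finset.disjoint_iff_inter_eq_empty, ← Aset_zero, ← hk,
        Aset_kOf hacyc]
  | succ m =>
    have hsub := sameLabelUnranked_subset_between hacyc hk
    have hne : labVertex adj L r v m ≠ v := by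
      rintro hwv
      rw [hwv, between_self hacyc] at hsub
      exact hC.ne_empty (Finset.subset_empty.mp hsub)
    refine ⟨labVertex adj L r v m, ?_, ?_⟩
    · rwa [candidate, if_neg hne]
    · rw [candidate, if_neg hne]
      exact disjoint_between_labVertex hacyc hk

lemma exists_candidate_lt_card (hacyc : IsAcyclic adj) {t : ℝ} (ht : 0 ≤ t)
    (hv : t < #(sameLabelUnranked adj L r v)) :
    ∃ j : V × V, t < #(candidate adj j.1 j.2) ∧ Disjoint (candidate adj j.1 j.2) L := by
  obtain ⟨w, hsub, hdisj⟩ :=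
    exists_candidate_superset hacyc (Finset.card_pos.mp (by exact_mod_cast ht.trans_lt hv))
  exact ⟨(w, v), hv.trans_le (by exact_mod_cast Finset.card_le_card hsub), hdisj⟩

end Cover

lemma one_sub_pow_le_exp_neg_mul {x : ℝ} (hx : x ≤ 1) (k : ℕ) :
    (1 - x) ^ k ≤ Real.exp (-(x * k)) :=
  calc (1 - x) ^ k ≤ Real.exp (-x) ^ k :=
        pow_le_pow_left₀ (by linarith) (Real.one_sub_le_exp_neg x) k
    _ = Real.exp (-(x * k)) := by rw [← Real.exp_nat_mul]; ring_nf

section Bernoulli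

open scoped NNReal

variable {ι Ω : Type*} [Fintype ι] [MeasurableSpace Ω] (p : ℝ≥0) (hp : p ≤ 1)

lemma pi_bernoulli_forall_eq_false (S : Finset ι) :
    Measure.pi (fun _ : ι => (PMF.bernoulli p hp).toMeasure) {f | ∀ x ∈ S, f x = false} =
      ((1 - p : ℝ≥0) : ℝ≥0∞) ^ #S := by
  change Measure.pi _ ((S : Set ι).pi fun _ => {false}) = _
  rw [Measure.pi_pi_finset, Finset.prod_const,
    PMF.toMeasure_apply_singleton _ _ (measurableSet_singleton _), PMF.bernoulli_apply]
  rfl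

lemma pi_bernoulli_prod_exists_forall_eq_false_le {κ : Type*} [Fintype κ] (ν : Measure Ω)
    [IsProbabilityMeasure ν] (S : κ → Finset ι) (t : ℝ) :
    ((Measure.pi fun _ : ι => (PMF.bernoulli p hp).toMeasure).prod ν)
        {ω | ∃ j, t < #(S j) ∧ ∀ x ∈ S j, ω.1 x = false} ≤
      Fintype.card κ * ENNReal.ofReal (Real.exp (-(p * t))) := by
  rw [Set.ofPred_exists]
  refine (measure_iUnion_fintype_le _ _).trans ?_
  rw [← nsmul_eq_mul, ← Finset.card_univ, ← Finset.sum_const]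
  refine Finset.sum_le_sum fun j _ => ?_
  by_cases ht : t < #(S j)
  · simp only [ht, true_and]
    rw [show {ω : (ι → Bool) × Ω | ∀ x ∈ S j, ω.1 x = false} =
        {f : ι → Bool | ∀ x ∈ S j, f x = false} ×ˢ Set.univ from by ext; simp,
      Measure.prod_prod, measure_univ, mul_one, pi_bernoulli_forall_eq_false, ← ENNReal.coe_pow, ← ENNReal.ofReal_coe_nnreal]
    refine ENNReal.ofReal_le_ofReal ?_
    calc (((1 - p) ^ #(S j) : ℝ≥0) : ℝ) = (1 - p) ^ #(S j) := by
          rw [NNReal.coe_pow, NNReal.coe_sub hp, NNReal.coe_one]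
      _ ≤ Real.exp (-(p * #(S j))) := one_sub_pow_le_exp_neg_mul (by exact_mod_cast hp) _
      _ ≤ Real.exp (-(p * t)) := by gcongr
  · simp [ht]

end Bernoulli

lemma natCast_mul_self_mul_exp_neg_mul_log {n : ℕ} (hn : 0 < n) (c : ℝ) :
    ((n * n : ℕ) : ℝ≥0∞) * ENNReal.ofReal (Real.exp (-(c * Real.log n))) =
      ENNReal.ofReal (1 / (n : ℝ) ^ (c - 2)) := by
  have hn' : (0 : ℝ) < n := by exact_mod_cast hn
  rw [← ENNReal.ofReal_natCast, ← ENNReal.ofReal_mul (by positivity)]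
  congr 1
  rw [Nat.cast_mul, Real.exp_neg, mul_comm c, ← Real.rpow_def_of_pos hn', Real.rpow_sub hn',
    Real.rpow_two]
  field_simp

lemma ofReal_one_sub_le_of_measure_compl_le {α : Type*} [MeasurableSpace α] {μ : Measure α}
    [IsProbabilityMeasure μ] {s : Set α} {ε : ℝ} (hε : 0 ≤ ε) (h : μ sᶜ ≤ ENNReal.ofReal ε) :
    ENNReal.ofReal (1 - ε) ≤ μ s := by
  rw [ENNReal.ofReal_sub _ hε, ENNReal.ofReal_one, tsub_le_iff_right, ← measure_univ (μ := μ)]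
  exact (measure_univ_le_add_compl s).trans (by gcongr)

/-- Lemma 3 of the paper: for a `q`-labeling of an `n`-vertex DAG (each
vertex independently ranked with probability `q`, with a uniformly random relative order
of the ranks, modeled by a uniformly random bijection `V ≃ Fin n` inducing the order),
and any `c ≥ 3`, with probability at least `1 − 1/n^{c−2}` every vertex `v` has at most
`c·log(n)/q` unranked predecessors `u` with `ℓ(u) = ℓ(v)`. -/
theorem q_labeling_few_same_label_predecessors
    [Fintype V] [DecidableEq V] [Nonempty V]
    (adj : V → V → Prop) (hacyc : IsAcyclic adj)
    (q : ℝ≥0∞) (hq1 : q ≤ 1) (hq0 : 0 < q) (c : ℝ) (hc : 3 ≤ c)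
    (P : Measure ((V → Bool) × (V ≃ Fin (Fintype.card V))))
    (hP : P = (Measure.pi fun _ : V => (PMF.bernoulli q.toNNReal (by simpa using ENNReal.toNNReal_mono ENNReal.one_ne_top hq1)).toMeasure).prod
      (PMF.uniformOfFintype (V ≃ Fin (Fintype.card V))).toMeasure)
    (Lset : (V → Bool) × (V ≃ Fin (Fintype.card V)) → Finset V)
    (hLset : ∀ ω, Lset ω = Finset.univ.filter fun w => ω.1 w = true)
    (rk : (V → Bool) × (V ≃ Fin (Fintype.card V)) → V → ℕ∞) :
    ENNReal.ofReal (1 - 1 / (Fintype.card V : ℝ) ^ (c - 2)) ≤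
      P {ω | ∀ v : V,
        ((Finset.univ.filter fun u =>
            ω.1 u = false ∧ reach adj u v ∧
            labelSeq adj (Lset ω) (rk ω) u = labelSeq adj (Lset ω) (rk ω) v).card : ℝ) ≤
          c * Real.log (Fintype.card V) / q.toReal} := by
  set t := c * Real.log (Fintype.card V) / q.toReal
  have hq : 0 < q.toReal := ENNReal.toReal_pos hq0.ne' (hq1.trans_lt ENNReal.one_lt_top).ne
  have ht : 0 ≤ t := by
    have := Real.log_nonneg (Nat.one_le_cast.mpr (Fintype.card_pos (α := V)))
    positivity
  have hpt : (q.toNNReal : ℝ) * t = c * Real.log (Fintype.card V) := by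
    rw [ENNReal.coe_toNNReal_eq_toReal, mul_div_cancel₀ _ hq.ne']
  have : IsProbabilityMeasure P := hP ▸ inferInstance
  set bad := {ω : (V → Bool) × (V ≃ Fin (Fintype.card V)) |
    ∃ j : V × V, t < #(candidate adj j.1 j.2) ∧ ∀ x ∈ candidate adj j.1 j.2, ω.1 x = false}
  refine ofReal_one_sub_le_of_measure_compl_le (by positivity)
    ((measure_mono (t := bad) fun ω hω => ?_).trans ?_)
  · simp only [Set.mem_compl_iff, Set.mem_setOf_eq, not_forall, not_le] at hω
    obtain ⟨v, hv⟩ := hω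
    obtain ⟨j, hj, hdisj⟩ := exists_candidate_lt_card (L := Lset ω) (r := rk ω) (v := v) hacyc ht
      (hv.trans_eq (by congr 2; ext u; simp [sameLabelUnranked, hLset]))
    exact ⟨j, hj, fun x hx => by simpa [hLset] using Finset.disjoint_left.mp hdisj hx⟩
  · rw [hP]
    refine (pi_bernoulli_prod_exists_forall_eq_false_le _ _ _ _ _).trans_eq ?_
    rw [Fintype.card_prod, hpt, natCast_mul_self_mul_exp_neg_mul_log Fintype.card_pos]
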